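/- arXiv:2506.08271 — 5 statements merged into one kernel-verified Lean document; each statement's English description precedes it below -/
import Mathlib

section
/- With the setup of the directed super-amalgamation system for a monadic ortholattice A: for every a ∈ A, b ∈ A_m, if d_n ∘ g_n(a) ≤ d_m(b) for all n ∈ ω, then d_n ∘ g_n(∃a) ≤ d_m(b) for all n ∈ ω. -/
structure IsOrtho {A : Type*} [Lattice A] [BoundedOrder A] (c : A → A) : Prop where
  inf_compl : ∀ a : A, a ⊓ c a = ⊥
  sup_compl : ∀ a : A, a ⊔ c a = ⊤
  anti : ∀ a b : A, a ≤ b → c b ≤ c a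
  invol : ∀ a : A, c (c a) = a

structure IsQuant {A : Type*} [Lattice A] [BoundedOrder A] (c : A → A) (E : A → A) : Prop where
  sup : ∀ a b : A, E (a ⊔ b) = E a ⊔ E b
  bot : E ⊥ = ⊥
  idem : ∀ a : A, E (E a) = E a
  le : ∀ a : A, a ≤ E a
  closed_compl : ∀ a : A, E (c (E a)) = c (E a)

structure IsOLEmb {A B : Type*} [Lattice A] [BoundedOrder A] [Lattice B] [BoundedOrder B]
    (cA : A → A) (cB : B → B) (φ : A → B) : Prop where
  inf : ∀ a b : A, φ (a ⊓ b) = φ a ⊓ φ b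
  sup : ∀ a b : A, φ (a ⊔ b) = φ a ⊔ φ b
  compl : ∀ a : A, φ (cA a) = cB (φ a)
  bot : φ ⊥ = ⊥
  top : φ ⊤ = ⊤
  inj : Function.Injective φ

/-! The hypothesis at level `m + 1` yields `g (m+1) a ≤ f m b`, and super-amalgamation supplies a
closed interpolant `c` with `a ≤ c`, hence `∃a ≤ c`. Because `c` is closed, the elements `g n c`
are compatible along the `f n`, so they all have the same image in the direct limit, and that image
lies below `d m b`. -/

theorem IsOLEmb.le_iff_le {A B : Type*} [Lattice A] [BoundedOrder A] [Lattice B] [BoundedOrder B]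
    {cA : A → A} {cB : B → B} {φ : A → B} (hφ : IsOLEmb cA cB φ) {a b : A} :
    φ a ≤ φ b ↔ a ≤ b := by
  rw [← inf_eq_left, ← hφ.inf, hφ.inj.eq_iff, inf_eq_left]

theorem IsQuant.monotone {A : Type*} [Lattice A] [BoundedOrder A] {c E : A → A}
    (hQ : IsQuant c E) : Monotone E := fun a b hab => by
  rw [← sup_eq_right.mpr hab, hQ.sup]
  exact le_sup_left

theorem map_thread_eq_map_zero {An : ℕ → Type*} {C : Type*}
    (f : ∀ n, An n → An (n + 1)) (d : ∀ n, An n → C) (hdf : ∀ n x, d n x = d (n + 1) (f n x))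
    (x : ∀ n, An n) (hx : ∀ n, x (n + 1) = f n (x n)) (n : ℕ) : d n (x n) = d 0 (x 0) := by
  induction n with
  | zero => rfl
  | succ k ih => rw [hx, ← hdf, ih]

theorem direct_limit_upper_bound_exists_general {A C : Type*} [Lattice A] [BoundedOrder A] [Lattice C] [BoundedOrder C]
    (cA : A → A) (E : A → A) (hQ : IsQuant cA E)
    (An : ℕ → Type*) [∀ n, Lattice (An n)] [∀ n, BoundedOrder (An n)]
    (cAn : ∀ n, An n → An n)
    (cC : C → C)
    (g : ∀ n, A → An n) (h : ∀ n, A → An n)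
    (f : ∀ n, An n → An (n + 1)) (d : ∀ n, An n → C)
    (hg : ∀ n, IsOLEmb cA (cAn n) (g n))
    (hd : ∀ n, IsOLEmb (cAn n) cC (d n))
    (hhg : ∀ n a, a = E a → h n a = g n a)
    (hgf : ∀ n a, a = E a → g (n + 1) a = f n (h n a))
    (hdf : ∀ n x, d n x = d (n + 1) (f n x))
    (hinterp : ∀ (m : ℕ) (a : A) (b : An m), g (m + 1) a ≤ f m b →
      ∃ cc : A, cc = E cc ∧ g (m + 1) a ≤ g (m + 1) cc ∧
        g (m + 1) cc = f m (h m cc) ∧ f m (h m cc) ≤ f m b) :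
    ∀ (a : A) (m : ℕ) (b : An m),
      (∀ n : ℕ, d n (g n a) ≤ d m b) → ∀ n : ℕ, d n (g n (E a)) ≤ d m b := by
  intro a m b hle n
  have hab : g (m + 1) a ≤ f m b := (hd (m + 1)).le_iff_le.mp (hdf m b ▸ hle (m + 1))
  obtain ⟨c, hc, hac, hgc, hcb⟩ := hinterp m a b hab
  have hEa : E a ≤ c := (hQ.monotone ((hg (m + 1)).le_iff_le.mp hac)).trans_eq hc.symm
  have hthread : ∀ k, d k (g k c) = d 0 (g 0 c) :=
    map_thread_eq_map_zero f d hdf (fun k => g k c) fun k => by rw [hgf k c hc, hhg k c hc]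
  calc d n (g n (E a)) ≤ d n (g n c) := (hd n).le_iff_le.mpr ((hg n).le_iff_le.mpr hEa)
    _ = d (m + 1) (g (m + 1) c) := by rw [hthread n, hthread (m + 1)]
    _ ≤ d (m + 1) (f m b) := (hd (m + 1)).le_iff_le.mpr (hgc ▸ hcb)
    _ = d m b := (hdf m b).symm

theorem direct_limit_upper_bound_exists {A C : Type*} [Lattice A] [BoundedOrder A] [Lattice C] [BoundedOrder C]
    (cA : A → A) (E : A → A) (hO : IsOrtho cA) (hQ : IsQuant cA E)
    (An : ℕ → Type*) [∀ n, Lattice (An n)] [∀ n, BoundedOrder (An n)]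
    (cAn : ∀ n, An n → An n) (hOn : ∀ n, IsOrtho (cAn n))
    (cC : C → C) (hOC : IsOrtho cC)
    (g : ∀ n, A → An n) (h : ∀ n, A → An n)
    (f : ∀ n, An n → An (n + 1)) (d : ∀ n, An n → C)
    (hg : ∀ n, IsOLEmb cA (cAn n) (g n))
    (hf : ∀ n, IsOLEmb (cAn n) (cAn (n + 1)) (f n))
    (hd : ∀ n, IsOLEmb (cAn n) cC (d n))
    (hhg : ∀ n a, a = E a → h n a = g n a)
    (hgf : ∀ n a, a = E a → g (n + 1) a = f n (h n a))
    (hdf : ∀ n x, d n x = d (n + 1) (f n x))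
    (hinterp : ∀ (m : ℕ) (a : A) (b : An m), g (m + 1) a ≤ f m b →
      ∃ cc : A, cc = E cc ∧ g (m + 1) a ≤ g (m + 1) cc ∧
        g (m + 1) cc = f m (h m cc) ∧ f m (h m cc) ≤ f m b) :
    ∀ (a : A) (m : ℕ) (b : An m),
      (∀ n : ℕ, d n (g n a) ≤ d m b) → ∀ n : ℕ, d n (g n (E a)) ≤ d m b :=
  direct_limit_upper_bound_exists_general cA E hQ An cAn cC g h f d hg hd hhg hgf hdf hinterp
end

section
/- Every monadic ortholattice is isomorphic to a functional monadic ortholattice, i.e., embeds as a monadic ortholattice into ⟨C̄^ω; ◇⟩ for some complete ortholattice C̄, where (◇f)(n) = ⋁_{m∈ω} f(m). -/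
def FunRepSpec {A : Type u} [Lattice A] [BoundedOrder A] (cA E : A → A)
    (C : Type u) [CompleteLattice C] (cC : C → C) (φ : A → ℕ → C) : Prop :=
  IsOrtho cC ∧ Function.Injective φ ∧
  (∀ a b : A, φ (a ⊓ b) = φ a ⊓ φ b) ∧
  (∀ a b : A, φ (a ⊔ b) = φ a ⊔ φ b) ∧
  (∀ a : A, φ (cA a) = fun n => cC (φ a n)) ∧
  φ ⊥ = ⊥ ∧ φ ⊤ = ⊤ ∧
  (∀ a : A, φ (E a) = fun _ => ⨆ m, φ a m)

namespace FunRepAux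

universe v

variable {A : Type v} [Lattice A] [BoundedOrder A]

section OrthoLemmas

variable {c E : A → A}

theorem le_c_swap (hO : IsOrtho c) {a b : A} (h : a ≤ c b) : b ≤ c a := by
  have := hO.anti _ _ h
  rwa [hO.invol] at this

theorem c_top (hO : IsOrtho c) : c ⊤ = ⊥ := by
  have h := hO.inf_compl ⊤
  rwa [top_inf_eq] at h

theorem c_bot (hO : IsOrtho c) : c ⊥ = ⊤ := by
  rw [← c_top hO, hO.invol]

theorem c_sup (hO : IsOrtho c) (a b : A) : c (a ⊔ b) = c a ⊓ c b := by
  apply le_antisymm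
  · exact le_inf (hO.anti _ _ le_sup_left) (hO.anti _ _ le_sup_right)
  · exact le_c_swap hO (sup_le (le_c_swap hO inf_le_left) (le_c_swap hO inf_le_right))

theorem c_inf (hO : IsOrtho c) (a b : A) : c (a ⊓ b) = c a ⊔ c b := by
  have h := c_sup hO (c a) (c b)
  rw [hO.invol, hO.invol] at h
  rw [← h, hO.invol]

theorem E_mono (hQ : IsQuant c E) {a b : A} (h : a ≤ b) : E a ≤ E b := by
  have h2 := hQ.sup a b
  rw [sup_eq_right.mpr h] at h2
  rw [h2]; exact le_sup_left

theorem cE_le_c (hO : IsOrtho c) (hQ : IsQuant c E) (a : A) : c (E a) ≤ c a :=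
  hO.anti _ _ (hQ.le a)

/-- the interior `c (E (c a))` is below `a` -/
theorem I_le (hO : IsOrtho c) (hQ : IsQuant c E) (a : A) : c (E (c a)) ≤ a := by
  have h : c (E (c a)) ≤ c (c a) := cE_le_c hO hQ (c a)
  rwa [hO.invol] at h

theorem cross_swap (hO : IsOrtho c) (hQ : IsQuant c E) {a b : A}
    (h : a ≤ c (E b)) : b ≤ c (E a) := by
  have h1 : E a ≤ c (E b) := by
    have := E_mono hQ h
    rwa [hQ.closed_compl] at this
  exact le_trans (hQ.le b) (le_c_swap hO h1)

end OrthoLemmas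

/-- The point set of the orthoframe: countably many copies of `A \ {⊥}`. -/
def Pt (A : Type v) [Lattice A] [BoundedOrder A] : Type v := ℕ × {x : A // x ≠ ⊥}

/-- The orthogonality relation. -/
def Rel (c E : A → A) (p q : Pt A) : Prop :=
  (p.1 = q.1 ∧ p.2.1 ≤ c q.2.1) ∨ (p.1 ≠ q.1 ∧ p.2.1 ≤ c (E q.2.1))

/-- Polar of a set of points. -/
def pol (c E : A → A) (S : Set (Pt A)) : Set (Pt A) := {q | ∀ p ∈ S, Rel c E q p}

section FrameLemmas

variable {c E : A → A}

theorem rel_irrefl (hO : IsOrtho c) (p : Pt A) : ¬ Rel c E p p := by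
  rintro (⟨-, h⟩ | ⟨h, -⟩)
  · have : p.2.1 = ⊥ := by
      have := le_inf le_rfl h
      rwa [hO.inf_compl, le_bot_iff] at this
    exact p.2.2 this
  · exact h rfl

theorem rel_symm (hO : IsOrtho c) (hQ : IsQuant c E) {p q : Pt A}
    (h : Rel c E p q) : Rel c E q p := by
  rcases h with ⟨h1, h2⟩ | ⟨h1, h2⟩
  · exact Or.inl ⟨h1.symm, le_c_swap hO h2⟩
  · exact Or.inr ⟨Ne.symm h1, cross_swap hO hQ h2⟩

theorem pol_anti {S T : Set (Pt A)} (h : S ⊆ T) : pol c E T ⊆ pol c E S :=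
  fun _ hq p hp => hq p (h hp)

theorem subset_pp (hO : IsOrtho c) (hQ : IsQuant c E) (S : Set (Pt A)) :
    S ⊆ pol c E (pol c E S) :=
  fun x hx p hp => rel_symm hO hQ (hp x hx)

theorem pp_mono (hO : IsOrtho c) (hQ : IsQuant c E) {S T : Set (Pt A)} (h : S ⊆ T) :
    pol c E (pol c E S) ⊆ pol c E (pol c E T) :=
  pol_anti (pol_anti h)

theorem pol_pp (hO : IsOrtho c) (hQ : IsQuant c E) (S : Set (Pt A)) :
    pol c E (pol c E (pol c E S)) = pol c E S :=
  Set.Subset.antisymm (pol_anti (subset_pp hO hQ S)) (subset_pp hO hQ (pol c E S))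

theorem inter_pol (hO : IsOrtho c) (S : Set (Pt A)) : S ∩ pol c E S = ∅ := by
  ext p
  simp only [Set.mem_inter_iff, Set.mem_empty_iff_false, iff_false, not_and]
  intro hS hpol
  exact rel_irrefl hO p (hpol p hS)

theorem pol_empty : pol c E (∅ : Set (Pt A)) = Set.univ := by
  ext p; simp [pol]

theorem pol_union (S T : Set (Pt A)) :
    pol c E (S ∪ T) = pol c E S ∩ pol c E T := by
  ext q
  constructor
  · intro h
    exact ⟨fun p hp => h p (Or.inl hp), fun p hp => h p (Or.inr hp)⟩
  · rintro ⟨h1, h2⟩ p (hp | hp)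
    · exact h1 p hp
    · exact h2 p hp

theorem pol_univ (hO : IsOrtho c) : pol c E (Set.univ : Set (Pt A)) = ∅ :=
  Set.eq_empty_iff_forall_notMem.mpr fun q hq => rel_irrefl hO q (hq q trivial)

theorem closed_empty (hO : IsOrtho c) :
    pol c E (pol c E (∅ : Set (Pt A))) = ∅ := by
  rw [pol_empty, pol_univ hO]

theorem closed_univ (hO : IsOrtho c) (hQ : IsQuant c E) :
    pol c E (pol c E (Set.univ : Set (Pt A))) = Set.univ :=
  Set.Subset.antisymm (Set.subset_univ _) (subset_pp hO hQ _)

end FrameLemmas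

/-- The complete ortholattice of Galois-closed sets. -/
def Cl (c E : A → A) : Type v := {S : Set (Pt A) // pol c E (pol c E S) = S}

instance (c E : A → A) : PartialOrder (Cl c E) := Subtype.partialOrder _

section ClLemmas

variable {c E : A → A}

theorem closed_biInter (hO : IsOrtho c) (hQ : IsQuant c E) (𝒮 : Set (Cl c E)) :
    pol c E (pol c E (⋂ S ∈ 𝒮, S.1)) = ⋂ S ∈ 𝒮, S.1 := by
  apply Set.Subset.antisymm
  · apply Set.subset_iInter₂
    intro S hS
    have h1 : pol c E (pol c E (⋂ T ∈ 𝒮, T.1)) ⊆ pol c E (pol c E S.1) :=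
      pp_mono hO hQ (Set.biInter_subset_of_mem hS)
    rwa [S.2] at h1
  · exact subset_pp hO hQ _

end ClLemmas

/-- The complete lattice structure on the closed sets. -/
@[reducible]
def instCl {c E : A → A} (hO : IsOrtho c) (hQ : IsQuant c E) : CompleteLattice (Cl c E) :=
  letI : InfSet (Cl c E) := ⟨fun 𝒮 => ⟨⋂ S ∈ 𝒮, S.1, closed_biInter hO hQ 𝒮⟩⟩
  completeLatticeOfInf _ (fun 𝒮 =>
    ⟨fun S hS => Set.biInter_subset_of_mem hS,
     fun b hb => Set.subset_iInter₂ fun S hS => hb hS⟩)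

/-- The coordinate embeddings, as sets. -/
def Tset (c E : A → A) (n : ℕ) (a : A) : Set (Pt A) :=
  {p | (p.1 = n ∧ p.2.1 ≤ a) ∨ (p.1 ≠ n ∧ p.2.1 ≤ c (E (c a)))}

section TsetLemmas

variable {c E : A → A}

theorem pol_Tset (hO : IsOrtho c) (hQ : IsQuant c E) (n : ℕ) (a : A) :
    pol c E (Tset c E n a) = Tset c E n (c a) := by
  ext q
  constructor
  · intro hq
    by_cases hqn : q.1 = n
    · refine Or.inl ⟨hqn, ?_⟩
      by_cases ha : a = ⊥
      · rw [ha, c_bot hO]; exact le_top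
      · have hmem : ((n, ⟨a, ha⟩) : Pt A) ∈ Tset c E n a := Or.inl ⟨rfl, le_rfl⟩
        rcases hq _ hmem with ⟨-, h⟩ | ⟨hne, -⟩
        · exact h
        · exact absurd hqn hne
    · refine Or.inr ⟨hqn, ?_⟩
      rw [hO.invol]
      by_cases ha : a = ⊥
      · rw [ha, hQ.bot, c_bot hO]; exact le_top
      · have hmem : ((n, ⟨a, ha⟩) : Pt A) ∈ Tset c E n a := Or.inl ⟨rfl, le_rfl⟩
        rcases hq _ hmem with ⟨heq, -⟩ | ⟨-, h⟩
        · exact absurd heq hqn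
        · exact h
  · intro hq p hp
    rcases hq with ⟨hq1, hq2⟩ | ⟨hq1, hq2⟩
    · rcases hp with ⟨hp1, hp2⟩ | ⟨hp1, hp2⟩
      · exact Or.inl ⟨hq1.trans hp1.symm, le_trans hq2 (hO.anti _ _ hp2)⟩
      · refine Or.inr ⟨by rw [hq1]; exact fun h => hp1 h.symm, ?_⟩
        -- p.2.1 ≤ c (E (c a)), so E p.2.1 ≤ c (E (c a)) ≤ a, hence c a ≤ c (E p.2.1)
        have h1 : E p.2.1 ≤ c (E (c a)) := by
          have := E_mono hQ hp2
          rwa [hQ.closed_compl] at this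
        have h2 : E p.2.1 ≤ a := le_trans h1 (I_le hO hQ a)
        have h3 : c a ≤ c (E p.2.1) := hO.anti _ _ h2
        exact le_trans hq2 h3
    · rw [hO.invol] at hq2
      rcases hp with ⟨hp1, hp2⟩ | ⟨hp1, hp2⟩
      · refine Or.inr ⟨by rw [hp1]; exact hq1, ?_⟩
        exact le_trans hq2 (hO.anti _ _ (E_mono hQ hp2))
      · have hEp : E p.2.1 ≤ c (E (c a)) := by
          have := E_mono hQ hp2
          rwa [hQ.closed_compl] at this
        have hkey : c (E a) ≤ c (E p.2.1) := by
          apply hO.anti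
          calc E p.2.1 ≤ c (E (c a)) := hEp
          _ ≤ a := I_le hO hQ a
          _ ≤ E a := hQ.le a
        by_cases hqp : q.1 = p.1
        · refine Or.inl ⟨hqp, ?_⟩
          calc q.2.1 ≤ c (E a) := hq2
          _ ≤ c (E p.2.1) := hkey
          _ ≤ c p.2.1 := cE_le_c hO hQ _
        · exact Or.inr ⟨hqp, le_trans hq2 hkey⟩
  
theorem Tset_closed (hO : IsOrtho c) (hQ : IsQuant c E) (n : ℕ) (a : A) :
    pol c E (pol c E (Tset c E n a)) = Tset c E n a := by
  rw [pol_Tset hO hQ, pol_Tset hO hQ, hO.invol]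

theorem Tset_inf (hO : IsOrtho c) (hQ : IsQuant c E) (n : ℕ) (a b : A) :
    Tset c E n (a ⊓ b) = Tset c E n a ∩ Tset c E n b := by
  have hI : c (E (c (a ⊓ b))) = c (E (c a)) ⊓ c (E (c b)) := by
    rw [c_inf hO, hQ.sup, c_sup hO]
  ext p
  by_cases hp : p.1 = n
  · simp only [Tset, Set.mem_setOf_eq, Set.mem_inter_iff, hp, ne_eq, not_true_eq_false,
      false_and, or_false, true_and, le_inf_iff]
  · simp only [Tset, Set.mem_setOf_eq, Set.mem_inter_iff, hp, ne_eq, not_false_eq_true,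
      true_and, false_and, false_or, hI, le_inf_iff]

theorem Tset_bot (hO : IsOrtho c) (hQ : IsQuant c E) (n : ℕ) :
    Tset c E n (⊥ : A) = ∅ := by
  ext p
  simp only [Tset, Set.mem_setOf_eq, Set.mem_empty_iff_false, iff_false]
  rintro (⟨-, h⟩ | ⟨-, h⟩)
  · exact p.2.2 (le_bot_iff.mp h)
  · rw [c_bot hO] at h
    have : E (⊤ : A) = ⊤ := le_antisymm le_top (hQ.le ⊤)
    rw [this, c_top hO] at h
    exact p.2.2 (le_bot_iff.mp h)

theorem Tset_top (hO : IsOrtho c) (hQ : IsQuant c E) (n : ℕ) :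
    Tset c E n (⊤ : A) = Set.univ := by
  ext p
  simp only [Tset, Set.mem_setOf_eq, Set.mem_univ, iff_true]
  by_cases hp : p.1 = n
  · exact Or.inl ⟨hp, le_top⟩
  · refine Or.inr ⟨hp, ?_⟩
    rw [c_top hO, hQ.bot, c_bot hO]
    exact le_top

theorem Tset_E (hO : IsOrtho c) (hQ : IsQuant c E) (n : ℕ) (a : A) :
    Tset c E n (E a) = {p : Pt A | p.2.1 ≤ E a} := by
  have h : c (E (c (E a))) = E a := by
    rw [hQ.closed_compl, hO.invol]
  ext p
  simp only [Tset, Set.mem_setOf_eq, h]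
  by_cases hp : p.1 = n <;> simp [hp]

theorem Tset_union (hO : IsOrtho c) (hQ : IsQuant c E) (a : A) :
    (⋃ m, Tset c E m a) = {p : Pt A | p.2.1 ≤ a} := by
  ext p
  simp only [Set.mem_iUnion, Set.mem_setOf_eq]
  constructor
  · rintro ⟨m, ⟨-, h⟩ | ⟨-, h⟩⟩
    · exact h
    · exact le_trans h (I_le hO hQ a)
  · intro h
    exact ⟨p.1, Or.inl ⟨rfl, h⟩⟩

theorem pol_Kset (hO : IsOrtho c) (hQ : IsQuant c E) (a : A) :
    pol c E {p : Pt A | p.2.1 ≤ a} = {p : Pt A | p.2.1 ≤ c (E a)} := by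
  ext q
  constructor
  · intro hq
    by_cases ha : a = ⊥
    · simp only [Set.mem_setOf_eq, ha, hQ.bot, c_bot hO]
      exact le_top
    · have hmem : ((q.1 + 1, ⟨a, ha⟩) : Pt A) ∈ {p : Pt A | p.2.1 ≤ a} := le_rfl
      rcases hq _ hmem with ⟨h1, -⟩ | ⟨-, h2⟩
      · exact absurd h1 (by simp)
      · exact h2
  · intro hq p hp
    by_cases hqp : q.1 = p.1
    · refine Or.inl ⟨hqp, ?_⟩
      calc q.2.1 ≤ c (E a) := hq
      _ ≤ c a := cE_le_c hO hQ a
      _ ≤ c p.2.1 := hO.anti _ _ hp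
    · refine Or.inr ⟨hqp, ?_⟩
      exact le_trans hq (hO.anti _ _ (E_mono hQ hp))

theorem Tle_of_subset (hO : IsOrtho c) (hQ : IsQuant c E) {a b : A}
    (h : Tset c E 0 a ⊆ Tset c E 0 b) : a ≤ b := by
  by_cases ha : a = ⊥
  · rw [ha]; exact bot_le
  · have hmem : ((0, ⟨a, ha⟩) : Pt A) ∈ Tset c E 0 a := Or.inl ⟨rfl, le_rfl⟩
    rcases h hmem with ⟨-, h2⟩ | ⟨h1, -⟩
    · exact h2
    · exact absurd rfl h1

end TsetLemmas

end FunRepAux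

open FunRepAux

theorem functional_representation_monadic_ortholattice
    {A : Type u} [Lattice A] [BoundedOrder A] (cA E : A → A)
    (hO : IsOrtho cA) (hQ : IsQuant cA E) :
    ∃ (C : Type u) (ic : CompleteLattice C) (cC : C → C) (φ : A → ℕ → C),
      @FunRepSpec A _ _ cA E C ic cC φ := by
  classical
  letI ic : CompleteLattice (Cl cA E) := instCl hO hQ
  set cC : Cl cA E → Cl cA E := fun S => ⟨pol cA E S.1, pol_pp hO hQ _⟩ with hcC
  set φ : A → ℕ → Cl cA E := fun a n => ⟨Tset cA E n a, Tset_closed hO hQ n a⟩ with hφ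
  have hle : ∀ x y : Cl cA E, x ≤ y ↔ x.1 ⊆ y.1 := fun x y => Iff.rfl
  -- bottom and top
  have hbot : (⊥ : Cl cA E) = ⟨∅, closed_empty hO⟩ := by
    apply le_antisymm bot_le
    exact (hle _ _).mpr (Set.empty_subset _)
  have htop : (⊤ : Cl cA E) = ⟨Set.univ, closed_univ hO hQ⟩ := by
    refine le_antisymm ?_ le_top
    exact (hle _ _).mpr (Set.subset_univ _)
  -- binary inf
  have hinf : ∀ x y : Cl cA E, (x ⊓ y).1 = x.1 ∩ y.1 := by
    intro x y
    have hcl : pol cA E (pol cA E (x.1 ∩ y.1)) = x.1 ∩ y.1 := by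
      apply Set.Subset.antisymm
      · apply Set.subset_inter
        · have h1 := pp_mono hO hQ (Set.inter_subset_left (s := x.1) (t := y.1))
          rwa [x.2] at h1
        · have h1 := pp_mono hO hQ (Set.inter_subset_right (s := x.1) (t := y.1))
          rwa [y.2] at h1
      · exact subset_pp hO hQ _
    have : x ⊓ y = ⟨x.1 ∩ y.1, hcl⟩ := by
      apply le_antisymm
      · exact (hle _ _).mpr (Set.subset_inter ((hle _ _).mp inf_le_left)
          ((hle _ _).mp inf_le_right))
      · exact le_inf ((hle _ _).mpr Set.inter_subset_left)
          ((hle _ _).mpr Set.inter_subset_right)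
    rw [this]
  -- binary sup
  have hsup : ∀ x y : Cl cA E, (x ⊔ y).1 = pol cA E (pol cA E (x.1 ∪ y.1)) := by
    intro x y
    have : x ⊔ y = ⟨pol cA E (pol cA E (x.1 ∪ y.1)), pol_pp hO hQ _⟩ := by
      apply le_antisymm
      · apply sup_le
        · exact (hle _ _).mpr (le_trans Set.subset_union_left (subset_pp hO hQ _))
        · exact (hle _ _).mpr (le_trans Set.subset_union_right (subset_pp hO hQ _))
      · apply (hle _ _).mpr
        have h1 : x.1 ∪ y.1 ⊆ (x ⊔ y).1 :=
          Set.union_subset ((hle _ _).mp le_sup_left) ((hle _ _).mp le_sup_right)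
        have h2 := pp_mono hO hQ h1
        rwa [(x ⊔ y).2] at h2
    rw [this]
  -- iSup
  have hiSup : ∀ f : ℕ → Cl cA E, (⨆ m, f m).1 = pol cA E (pol cA E (⋃ m, (f m).1)) := by
    intro f
    have : (⨆ m, f m) = ⟨pol cA E (pol cA E (⋃ m, (f m).1)), pol_pp hO hQ _⟩ := by
      apply le_antisymm
      · apply iSup_le
        intro m
        exact (hle _ _).mpr (le_trans (Set.subset_iUnion (fun m => (f m).1) m)
          (subset_pp hO hQ _))
      · apply (hle _ _).mpr
        have h1 : (⋃ m, (f m).1) ⊆ (⨆ m, f m).1 :=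
          Set.iUnion_subset fun m => (hle _ _).mp (le_iSup f m)
        have h2 := pp_mono hO hQ h1
        rwa [(⨆ m, f m).2] at h2
    rw [this]
  refine ⟨Cl cA E, ic, cC, φ, ?_, ?_, ?_, ?_, ?_, ?_, ?_, ?_⟩
  · -- IsOrtho cC
    refine ⟨?_, ?_, ?_, ?_⟩
    · intro x
      apply Subtype.ext
      rw [hinf, hbot]
      exact inter_pol hO x.1
    · intro x
      apply Subtype.ext
      rw [hsup, htop]
      show pol cA E (pol cA E (x.1 ∪ pol cA E x.1)) = Set.univ
      rw [pol_union, x.2, Set.inter_comm, inter_pol hO, pol_empty]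
    · intro x y hxy
      exact (hle _ _).mpr (pol_anti ((hle _ _).mp hxy))
    · intro x
      exact Subtype.ext x.2
  · -- injective
    intro a b hab
    have h0 : Tset cA E 0 a = Tset cA E 0 b :=
      congrArg Subtype.val (congrFun hab 0)
    exact le_antisymm (Tle_of_subset hO hQ h0.subset) (Tle_of_subset hO hQ h0.superset)
  · -- meet
    intro a b
    funext n
    apply Subtype.ext
    rw [show (φ a ⊓ φ b) n = φ a n ⊓ φ b n from rfl, hinf]
    exact Tset_inf hO hQ n a b
  · -- join
    intro a b
    funext n
    apply Subtype.ext
    rw [show (φ a ⊔ φ b) n = φ a n ⊔ φ b n from rfl, hsup]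
    show Tset cA E n (a ⊔ b) = pol cA E (pol cA E (Tset cA E n a ∪ Tset cA E n b))
    rw [pol_union, pol_Tset hO hQ, pol_Tset hO hQ, ← Tset_inf hO hQ, pol_Tset hO hQ,
      c_inf hO, hO.invol, hO.invol]
  · -- complement
    intro a
    funext n
    apply Subtype.ext
    show Tset cA E n (cA a) = pol cA E (Tset cA E n a)
    rw [pol_Tset hO hQ]
  · -- bot
    funext n
    apply Subtype.ext
    rw [show (⊥ : ℕ → Cl cA E) n = ⊥ from rfl, hbot]
    exact Tset_bot hO hQ n
  · -- top
    funext n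
    apply Subtype.ext
    rw [show (⊤ : ℕ → Cl cA E) n = ⊤ from rfl, htop]
    exact Tset_top hO hQ n
  · -- E
    intro a
    funext n
    apply Subtype.ext
    rw [hiSup]
    show Tset cA E n (E a) = pol cA E (pol cA E (⋃ m, Tset cA E m a))
    rw [Tset_union hO hQ, pol_Kset hO hQ, pol_Kset hO hQ, hQ.closed_compl, hO.invol,
      Tset_E hO hQ]
end

section
/- For an ortholattice A, the map g : A → B(X_A) defined by g(a) = {b ∈ A∖{0} : b ≤ a} is an injective ortholattice homomorphism into the complete ortholattice of bi-orthogonally closed subsets of the orthoframe X_A = ⟨A∖{0}; ⊥⟩, where a ⊥ b ⟺ a ≤ b^⊥. -/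
def perp {X : Type*} (r : X → X → Prop) (U : Set X) : Set X :=
  {a | ∀ b ∈ U, r a b}

section Perp

variable {X : Type*} (r : X → X → Prop)

theorem perp_union (U V : Set X) : perp r (U ∪ V) = perp r U ∩ perp r V := by
  ext x
  simp only [perp, Set.mem_ofPred_eq, Set.mem_inter_iff, Set.mem_union, or_imp, forall_and]

end Perp

namespace IsOrtho

variable {A : Type*} [Lattice A] [BoundedOrder A] {c : A → A}

theorem compl_bot (h : IsOrtho c) : c ⊥ = ⊤ := by
  simpa using h.sup_compl ⊥

theorem compl_sup (h : IsOrtho c) (a b : A) : c (a ⊔ b) = c a ⊓ c b := by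
  refine le_antisymm (le_inf (h.anti _ _ le_sup_left) (h.anti _ _ le_sup_right)) ?_
  have hle : a ⊔ b ≤ c (c a ⊓ c b) := by
    refine sup_le ?_ ?_
    · simpa only [h.invol] using h.anti _ _ (inf_le_left : c a ⊓ c b ≤ c a)
    · simpa only [h.invol] using h.anti _ _ (inf_le_right : c a ⊓ c b ≤ c b)
  simpa only [h.invol] using h.anti _ _ hle

theorem compl_inf (h : IsOrtho c) (a b : A) : c (a ⊓ b) = c a ⊔ c b := by
  rw [← h.invol (c a ⊔ c b), h.compl_sup, h.invol, h.invol]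

end IsOrtho

section NonzeroIic

variable {A : Type*}

def nonzeroIic [PartialOrder A] [OrderBot A] (a : A) : Set {x : A // x ≠ ⊥} :=
  {b | (b : A) ≤ a}

def orthoRel [Preorder A] [OrderBot A] (c : A → A) (x y : {x : A // x ≠ ⊥}) : Prop :=
  (x : A) ≤ c y

theorem nonzeroIic_subset_iff [PartialOrder A] [OrderBot A] {a b : A} :
    nonzeroIic a ⊆ nonzeroIic b ↔ a ≤ b := by
  refine ⟨fun hab => ?_, fun hab x hx => le_trans hx hab⟩
  rcases eq_or_ne a ⊥ with rfl | ha
  · exact bot_le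
  · exact hab (show (⟨a, ha⟩ : {x : A // x ≠ ⊥}) ∈ nonzeroIic a from le_rfl)

theorem nonzeroIic_injective [PartialOrder A] [OrderBot A] :
    Function.Injective (nonzeroIic : A → Set {x : A // x ≠ ⊥}) := fun _ _ hab =>
  le_antisymm (nonzeroIic_subset_iff.1 hab.le) (nonzeroIic_subset_iff.1 hab.ge)

theorem nonzeroIic_inf [SemilatticeInf A] [OrderBot A] (a b : A) :
    nonzeroIic (a ⊓ b) = nonzeroIic a ∩ nonzeroIic b := by
  ext x
  exact le_inf_iff

theorem nonzeroIic_bot [PartialOrder A] [OrderBot A] :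
    nonzeroIic (⊥ : A) = ∅ :=
  Set.eq_empty_of_forall_notMem fun x hx => x.2 (le_bot_iff.1 hx)

theorem nonzeroIic_top [PartialOrder A] [BoundedOrder A] :
    nonzeroIic (⊤ : A) = Set.univ :=
  Set.eq_univ_of_forall fun _ => le_top

variable [Lattice A] [BoundedOrder A] {c : A → A}

theorem perp_nonzeroIic (h : IsOrtho c) (a : A) :
    perp (orthoRel c) (nonzeroIic a) = nonzeroIic (c a) := by
  ext x
  refine ⟨fun hx => ?_, fun hx b hb => le_trans hx (h.anti _ _ hb)⟩
  rcases eq_or_ne a ⊥ with rfl | ha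
  · exact h.compl_bot ▸ le_top
  · exact hx ⟨a, ha⟩ le_rfl

theorem perp_perp_nonzeroIic (h : IsOrtho c) (a : A) :
    perp (orthoRel c) (perp (orthoRel c) (nonzeroIic a)) = nonzeroIic a := by
  rw [perp_nonzeroIic h, perp_nonzeroIic h, h.invol]

theorem perp_perp_nonzeroIic_union (h : IsOrtho c) (a b : A) :
    perp (orthoRel c) (perp (orthoRel c) (nonzeroIic a ∪ nonzeroIic b)) =
      nonzeroIic (a ⊔ b) := by
  rw [perp_union, perp_nonzeroIic h, perp_nonzeroIic h, ← nonzeroIic_inf, perp_nonzeroIic h,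
    h.compl_inf, h.invol, h.invol]

end NonzeroIic

theorem macneille_embedding {A : Type*} [Lattice A] [BoundedOrder A]
    (c : A → A) (h : IsOrtho c) :
    let r : {a : A // a ≠ ⊥} → {a : A // a ≠ ⊥} → Prop := fun x y => (x : A) ≤ c y
    let g : A → Set {a : A // a ≠ ⊥} := fun a => {b | (b : A) ≤ a}
    (∀ a : A, g a = perp r (perp r (g a))) ∧
    Function.Injective g ∧
    (∀ a b : A, g (a ⊓ b) = g a ∩ g b) ∧
    (∀ a b : A, g (a ⊔ b) = perp r (perp r (g a ∪ g b))) ∧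
    (∀ a : A, g (c a) = perp r (g a)) ∧
    g ⊥ = (∅ : Set {a : A // a ≠ ⊥}) ∧
    g ⊤ = (Set.univ : Set {a : A // a ≠ ⊥}) :=
  ⟨fun a => (perp_perp_nonzeroIic h a).symm, nonzeroIic_injective, nonzeroIic_inf,
    fun a b => (perp_perp_nonzeroIic_union h a b).symm, fun a => (perp_nonzeroIic h a).symm,
    nonzeroIic_bot, nonzeroIic_top⟩
end

section
/- Every locally finite δ-free cylindric ortholattice ⟨A; (∃_i)_{i∈I}⟩ induces a locally finite σ-free polyadic ortholattice: setting ∇_∅ a = a, ∇_J a = ∃_{j₁}⋯∃_{j_n} a for finite J = {j₁,…,j_n}, and ∇_J a = ∇_{J∖S_a} a for infinite J where S_a = {j : ∃_j a = a}, the operations satisfy ∇_{J∪K} a = ∇_J ∇_K a and each element has finite support. -/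
section Aux

variable {A : Type*} [Lattice A] [BoundedOrder A] {I : Type*}
variable (E : I → A → A)

/-- Apply the quantifiers indexed by a finset, in any order. -/
noncomputable def cpAppF (hcomm : ∀ i k a, E i (E k a) = E k (E i a))
    (s : Finset I) : Function.End A :=
  s.noncommProd (fun i => E i) (fun i _ j _ _ => funext fun a => hcomm i j a)

noncomputable def cpApp (hcomm : ∀ i k a, E i (E k a) = E k (E i a))
    (s : Finset I) (a : A) : A :=
  cpAppF E hcomm s a

variable (hcomm : ∀ i k a, E i (E k a) = E k (E i a))

lemma cpApp_empty (a : A) : cpApp E hcomm ∅ a = a := by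
  unfold cpApp cpAppF
  erw [Finset.noncommProd_empty]
  rfl

lemma cpApp_insert_of_not_mem [DecidableEq I] {j : I} {s : Finset I} (h : j ∉ s) (a : A) :
    cpApp E hcomm (insert j s) a = E j (cpApp E hcomm s a) := by
  unfold cpApp cpAppF
  erw [Finset.noncommProd_insert_of_notMem _ _ _ _ h]
  rfl

lemma cpApp_comm (j : I) (s : Finset I) (a : A) :
    E j (cpApp E hcomm s a) = cpApp E hcomm s (E j a) := by
  classical
  induction s using Finset.induction_on with
  | empty => simp [cpApp_empty]
  | @insert _ _ hns ih =>
    rw [cpApp_insert_of_not_mem E hcomm hns, cpApp_insert_of_not_mem E hcomm hns, hcomm, ih]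

lemma cpApp_mem_fix (hidem : ∀ j a, E j (E j a) = E j a) {j : I} {s : Finset I}
    (h : j ∈ s) (a : A) : E j (cpApp E hcomm s a) = cpApp E hcomm s a := by
  classical
  obtain ⟨t, hjt, rfl⟩ : ∃ t : Finset I, j ∉ t ∧ s = insert j t :=
    ⟨s.erase j, Finset.notMem_erase _ _, (Finset.insert_erase h).symm⟩
  rw [cpApp_insert_of_not_mem E hcomm hjt, hidem]

lemma cpApp_insert [DecidableEq I] (hidem : ∀ j a, E j (E j a) = E j a) (j : I) (s : Finset I) (a : A) :
    cpApp E hcomm (insert j s) a = E j (cpApp E hcomm s a) := by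
  classical
  by_cases h : j ∈ s
  · rw [Finset.insert_eq_self.2 h, cpApp_mem_fix E hcomm hidem h]
  · exact cpApp_insert_of_not_mem E hcomm h a

lemma cpApp_union [DecidableEq I] (hidem : ∀ j a, E j (E j a) = E j a) (s t : Finset I) (a : A) :
    cpApp E hcomm (s ∪ t) a = cpApp E hcomm s (cpApp E hcomm t a) := by
  classical
  induction s using Finset.induction_on with
  | empty => simp [cpApp_empty]
  | @insert j s hns ih =>
    rw [Finset.insert_union, cpApp_insert E hcomm hidem, ih,
      cpApp_insert_of_not_mem E hcomm hns]

lemma cpApp_fix {s : Finset I} {a : A} (h : ∀ j ∈ s, E j a = a) :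
    cpApp E hcomm s a = a := by
  classical
  induction s using Finset.induction_on with
  | empty => exact cpApp_empty E hcomm a
  | @insert j s hns ih =>
    rw [cpApp_insert_of_not_mem E hcomm hns, cpApp_comm E hcomm,
      h j (Finset.mem_insert_self _ _), ih fun k hk => h k (Finset.mem_insert_of_mem hk)]

lemma cpApp_le (hle : ∀ j (a : A), a ≤ E j a) (s : Finset I) (a : A) :
    a ≤ cpApp E hcomm s a := by
  classical
  induction s using Finset.induction_on with
  | empty => exact (cpApp_empty E hcomm a).ge
  | @insert j s hns ih =>
    rw [cpApp_insert_of_not_mem E hcomm hns]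
    exact ih.trans (hle j _)

lemma cpApp_sup (hsup : ∀ j (a b : A), E j (a ⊔ b) = E j a ⊔ E j b) (s : Finset I) (a b : A) :
    cpApp E hcomm s (a ⊔ b) = cpApp E hcomm s a ⊔ cpApp E hcomm s b := by
  classical
  induction s using Finset.induction_on with
  | empty => simp [cpApp_empty]
  | @insert j s hns ih =>
    rw [cpApp_insert_of_not_mem E hcomm hns, cpApp_insert_of_not_mem E hcomm hns,
      cpApp_insert_of_not_mem E hcomm hns, ih, hsup]

end Aux

theorem cylindric_to_polyadic {A : Type*} [Lattice A] [BoundedOrder A] {I : Type*}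
    (c : A → A) (hO : IsOrtho c)
    (E : I → A → A) (hQ : ∀ i, IsQuant c (E i))
    (hcomm : ∀ i k a, E i (E k a) = E k (E i a))
    (hlf : ∀ a : A, {j : I | E j a ≠ a}.Finite) :
    ∃ N : Set I → A → A,
      (∀ (i : I) (a : A), N {i} a = E i a) ∧
      (∀ a : A, N ∅ a = a) ∧
      (∀ J K : Set I, J.Nonempty → K.Nonempty → ∀ a : A, N (J ∪ K) a = N J (N K a)) ∧
      (∀ J : Set I, IsQuant c (N J)) ∧
      (∀ a : A, ∃ J : Set I, J.Finite ∧ N Jᶜ a = a) := by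
  classical
  have hidem : ∀ j (a : A), E j (E j a) = E j a := fun j a => (hQ j).idem a
  -- the finset of "movers" of a inside J
  let D : Set I → A → Finset I := fun J a => (hlf a).toFinset.filter (· ∈ J)
  have hmemD : ∀ J a j, j ∈ D J a ↔ (E j a ≠ a ∧ j ∈ J) := by
    intro J a j; simp [D]
  let N : Set I → A → A := fun J a => cpApp E hcomm (D J a) a
  -- master lemma: N J a can be computed by any finset u of indices in J containing D J a
  have master : ∀ (J : Set I) (u : Finset I) (a : A), (∀ j ∈ u, j ∈ J) →
      D J a ⊆ u → N J a = cpApp E hcomm u a := by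
    intro J u a hu hsub
    have hu' : u = (u \ D J a) ∪ D J a := by
      rw [Finset.sdiff_union_self_eq_union, Finset.union_eq_left.2 hsub]
    show cpApp E hcomm (D J a) a = cpApp E hcomm u a
    conv_rhs => rw [hu', cpApp_union E hcomm hidem]
    refine (cpApp_fix E hcomm ?_).symm
    intro j hj
    rw [Finset.mem_sdiff] at hj
    have h2 : E j a = a := by
      by_contra h3
      exact hj.2 ((hmemD J a j).2 ⟨h3, hu j hj.1⟩)
    rw [cpApp_comm E hcomm, h2]
  -- every j ∈ J fixes N J a
  have hfixN : ∀ (J : Set I) (a : A) (j : I), j ∈ J → E j (N J a) = N J a := by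
    intro J a j hj
    by_cases h : E j a = a
    · show E j (cpApp E hcomm (D J a) a) = _
      rw [cpApp_comm E hcomm, h]
    · exact cpApp_mem_fix E hcomm hidem ((hmemD J a j).2 ⟨h, hj⟩) a
  refine ⟨N, ?_, ?_, ?_, ?_, ?_⟩
  · -- singleton
    intro i a
    show cpApp E hcomm (D {i} a) a = E i a
    by_cases h : E i a = a
    · have hempty : D {i} a = ∅ := by
        ext j; simp only [hmemD, Set.mem_singleton_iff, Finset.notMem_empty, iff_false]
        rintro ⟨hne, rfl⟩; exact hne h
      rw [hempty, cpApp_empty, h]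
    · have hsing : D {i} a = {i} := by
        ext j
        simp only [hmemD, Set.mem_singleton_iff, Finset.mem_singleton]
        constructor
        · rintro ⟨-, rfl⟩; rfl
        · rintro rfl; exact ⟨h, rfl⟩
      rw [hsing, show ({i} : Finset I) = insert i ∅ by rfl,
        cpApp_insert_of_not_mem E hcomm (Finset.notMem_empty i), cpApp_empty]
  · -- empty
    intro a
    show cpApp E hcomm (D ∅ a) a = a
    have : D ∅ a = ∅ := by ext j; simp [hmemD]
    rw [this, cpApp_empty]
  · -- union
    intro J K _ _ a
    have hDb : D J (N K a) ⊆ D J a := by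
      intro j hj
      rw [hmemD] at hj ⊢
      refine ⟨fun h => hj.1 ?_, hj.2⟩
      show E j (cpApp E hcomm (D K a) a) = cpApp E hcomm (D K a) a
      rw [cpApp_comm E hcomm, h]
    have h1 : N (J ∪ K) a = cpApp E hcomm (D J a ∪ D K a) a := by
      apply master
      · intro j hj
        rcases Finset.mem_union.1 hj with h | h
        · exact Or.inl ((hmemD J a j).1 h).2
        · exact Or.inr ((hmemD K a j).1 h).2
      · intro j hj
        rw [hmemD] at hj
        rcases hj.2 with h | h
        · exact Finset.mem_union_left _ ((hmemD J a j).2 ⟨hj.1, h⟩)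
        · exact Finset.mem_union_right _ ((hmemD K a j).2 ⟨hj.1, h⟩)
    rw [h1, cpApp_union E hcomm hidem]
    exact (master J (D J a) (N K a) (fun j hj => ((hmemD J a j).1 hj).2) hDb).symm
  · -- IsQuant
    intro J
    refine ⟨?_, ?_, ?_, ?_, ?_⟩
    · intro a b
      set u := D J (a ⊔ b) ∪ (D J a ∪ D J b) with hu
      have huJ : ∀ j ∈ u, j ∈ J := by
        intro j hj
        rcases Finset.mem_union.1 hj with h | h
        · exact ((hmemD _ _ j).1 h).2
        · rcases Finset.mem_union.1 h with h | h
          · exact ((hmemD _ _ j).1 h).2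
          · exact ((hmemD _ _ j).1 h).2
      have e1 : N J (a ⊔ b) = cpApp E hcomm u (a ⊔ b) :=
        master J u _ huJ Finset.subset_union_left
      have e2 : N J a = cpApp E hcomm u a :=
        master J u _ huJ (Finset.subset_union_left.trans Finset.subset_union_right)
      have e3 : N J b = cpApp E hcomm u b :=
        master J u _ huJ (Finset.subset_union_right.trans Finset.subset_union_right)
      rw [e1, e2, e3, cpApp_sup E hcomm (fun j => (hQ j).sup)]
    · show cpApp E hcomm (D J ⊥) ⊥ = ⊥
      have : D J (⊥ : A) = ∅ := by
        ext j
        simp only [hmemD, Finset.notMem_empty, iff_false]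
        rintro ⟨h, -⟩; exact h ((hQ j).bot)
      rw [this, cpApp_empty]
    · intro a
      show cpApp E hcomm (D J (N J a)) (N J a) = N J a
      have : D J (N J a) = ∅ := by
        ext j
        simp only [hmemD, Finset.notMem_empty, iff_false]
        rintro ⟨h, hj⟩; exact h (hfixN J a j hj)
      rw [this, cpApp_empty]
    · intro a
      exact cpApp_le E hcomm (fun j a => (hQ j).le a) _ a
    · intro a
      have key : ∀ j ∈ J, E j (c (N J a)) = c (N J a) := by
        intro j hj
        have h1 : N J a = E j (N J a) := (hfixN J a j hj).symm
        calc E j (c (N J a)) = E j (c (E j (N J a))) := by rw [← h1]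
          _ = c (E j (N J a)) := (hQ j).closed_compl _
          _ = c (N J a) := by rw [← h1]
      show cpApp E hcomm (D J (c (N J a))) (c (N J a)) = c (N J a)
      have : D J (c (N J a)) = ∅ := by
        ext j
        simp only [hmemD, Finset.notMem_empty, iff_false]
        rintro ⟨h, hj⟩; exact h (key j hj)
      rw [this, cpApp_empty]
  · -- finite support
    intro a
    refine ⟨{j | E j a ≠ a}, hlf a, ?_⟩
    show cpApp E hcomm (D {j | E j a ≠ a}ᶜ a) a = a
    have : D {j | E j a ≠ a}ᶜ a = ∅ := by
      ext j
      simp only [hmemD, Set.mem_compl_iff, Set.mem_setOf_eq, not_not,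
        Finset.notMem_empty, iff_false]
      rintro ⟨h1, h2⟩; exact h1 h2
    rw [this, cpApp_empty]
end

section
/- Let I be a set, X a nonempty set, and A a complete ortholattice. On A^{X^I} with pointwise ortholattice operations and (∇̂_J f)(x⃗) = ⋁{f(y⃗) : x⃗(i) = y⃗(i) for all i ∈ I∖J}, the family (∇̂_J)_{J⊆I} satisfies ∇̂_∅ f = f and ∇̂_{J∪K} f = ∇̂_J(∇̂_K f) for all nonempty J, K ⊆ I, and each ∇̂_J is a quantifier; hence the full functional σ-free polyadic ortholattice is a σ-free polyadic ortholattice. -/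
/-!
`∇̂_J f` is the supremum of `f` over the `J_*`-class of a point. Since `J_*` is an equivalence,
`∇̂_J f` is constant on classes and every function constant on classes is fixed by `∇̂_J`; this
gives idempotence and the closure of the image under the pointwise orthocomplement. The
composition law holds because a point that agrees with `x` off `J ∪ K` can be reached in two
steps, first changing the `J`-coordinates, then the `K`-coordinates.
-/

namespace FullFunctionalPolyadic

variable {I X A : Type*}

def IsInvariantOff (J : Set I) (g : (I → X) → A) : Prop :=
  ∀ x y : I → X, (∀ i ∉ J, x i = y i) → g x = g y

theorem IsInvariantOff.comp {J : Set I} {g : (I → X) → A} (hg : IsInvariantOff J g)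
    (c : A → A) : IsInvariantOff J (fun x => c (g x)) :=
  fun x y hxy => congrArg c (hg x y hxy)

variable [CompleteLattice A]

def nablaHat (J : Set I) (f : (I → X) → A) (x : I → X) : A :=
  ⨆ y ∈ {y : I → X | ∀ i ∉ J, x i = y i}, f y

theorem le_nablaHat_of_agree {J : Set I} (f : (I → X) → A) {x y : I → X}
    (hxy : ∀ i ∉ J, x i = y i) : f y ≤ nablaHat J f x :=
  le_iSup₂ (f := fun y _ => f y) y hxy

theorem le_nablaHat (J : Set I) (f : (I → X) → A) : f ≤ nablaHat J f :=
  fun _ => le_nablaHat_of_agree f fun _ _ => rfl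

theorem isInvariantOff_nablaHat (J : Set I) (f : (I → X) → A) :
    IsInvariantOff J (nablaHat J f) := by
  intro x y hxy
  have hclass : {z : I → X | ∀ i ∉ J, x i = z i} = {z | ∀ i ∉ J, y i = z i} := by
    ext z
    simp only [Set.mem_ofPred_eq]
    exact forall₂_congr fun i hi => by rw [hxy i hi]
  simp only [nablaHat, hclass]

theorem nablaHat_eq_self_of_isInvariantOff {J : Set I} {g : (I → X) → A}
    (hg : IsInvariantOff J g) : nablaHat J g = g :=
  le_antisymm (fun x => iSup₂_le fun y hy => (hg x y hy).ge) (le_nablaHat J g)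

theorem nablaHat_empty (f : (I → X) → A) : nablaHat ∅ f = f := by
  funext x
  have hclass : {y : I → X | ∀ i ∉ (∅ : Set I), x i = y i} = {x} := by
    ext y
    simp only [Set.mem_ofPred_eq, Set.notMem_empty, not_false_eq_true, forall_const,
      Set.mem_singleton_iff]
    exact ⟨fun h => (funext h).symm, fun h i => h ▸ rfl⟩
  simp only [nablaHat, hclass, iSup_singleton]

theorem nablaHat_union (J K : Set I) (f : (I → X) → A) :
    nablaHat (J ∪ K) f = nablaHat J (nablaHat K f) := by
  classical
  funext x
  apply le_antisymm
  · refine iSup₂_le fun y hy => ?_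
    have hxz : ∀ i ∉ J, x i = J.piecewise y x i := fun i hi => by
      simp [Set.piecewise_eq_of_notMem, hi]
    have hzy : ∀ i ∉ K, J.piecewise y x i = y i := fun i hi => by
      by_cases hiJ : i ∈ J
      · simp [hiJ]
      · simpa [hiJ] using hy i (by simp [hiJ, hi])
    exact (le_nablaHat_of_agree f hzy).trans (le_nablaHat_of_agree _ hxz)
  · refine iSup₂_le fun z hxz => iSup₂_le fun y hzy => le_nablaHat_of_agree f ?_
    intro i hi
    rw [Set.mem_union, not_or] at hi
    exact (hxz i hi.1).trans (hzy i hi.2)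

theorem nablaHat_sup (J : Set I) (f g : (I → X) → A) :
    nablaHat J (f ⊔ g) = nablaHat J f ⊔ nablaHat J g := by
  funext x
  simp only [nablaHat, Pi.sup_apply, iSup_sup_eq]

theorem nablaHat_bot (J : Set I) : nablaHat J (⊥ : (I → X) → A) = ⊥ := by
  funext x
  simp only [nablaHat, Pi.bot_apply, iSup_bot]

theorem isQuant_nablaHat (c : A → A) (J : Set I) :
    IsQuant (A := (I → X) → A) (fun f x => c (f x)) (nablaHat J) where
  sup := nablaHat_sup J
  bot := nablaHat_bot J
  idem f := nablaHat_eq_self_of_isInvariantOff (isInvariantOff_nablaHat J f)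
  le := le_nablaHat J
  closed_compl f := nablaHat_eq_self_of_isInvariantOff ((isInvariantOff_nablaHat J f).comp c)

end FullFunctionalPolyadic

open FullFunctionalPolyadic in
theorem full_functional_polyadic_general {I X : Type*}
    {A : Type*} [CompleteLattice A] (c : A → A) :
    let Nhat : Set I → ((I → X) → A) → ((I → X) → A) :=
      fun J f x => ⨆ y ∈ {y : I → X | ∀ i ∉ J, x i = y i}, f y
    (∀ f : (I → X) → A, Nhat ∅ f = f) ∧
    (∀ J K : Set I, J.Nonempty → K.Nonempty →
      ∀ f : (I → X) → A, Nhat (J ∪ K) f = Nhat J (Nhat K f)) ∧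
    (∀ J : Set I, IsQuant (A := (I → X) → A) (fun f x => c (f x)) (Nhat J)) :=
  ⟨nablaHat_empty, fun J K _ _ => nablaHat_union J K, isQuant_nablaHat c⟩

theorem full_functional_polyadic {I X : Type*} [Nonempty X]
    {A : Type*} [CompleteLattice A] (c : A → A) (hO : IsOrtho c) :
    let Nhat : Set I → ((I → X) → A) → ((I → X) → A) :=
      fun J f x => ⨆ y ∈ {y : I → X | ∀ i ∉ J, x i = y i}, f y
    (∀ f : (I → X) → A, Nhat ∅ f = f) ∧
    (∀ J K : Set I, J.Nonempty → K.Nonempty →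
      ∀ f : (I → X) → A, Nhat (J ∪ K) f = Nhat J (Nhat K f)) ∧
    (∀ J : Set I, IsQuant (A := (I → X) → A) (fun f x => c (f x)) (Nhat J)) :=
  full_functional_polyadic_general c
end
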